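/- arXiv:1206.4726 — 2 statements merged into one kernel-verified Lean document; each statement's English description precedes it below -/
import Mathlib

section
/- Let r(x) = (1+x²)^σ with σ > 0. Then κ = sup_{x ∈ ℝ} ∫_ℝ (r(x)/r(y)) e^{-|x-y|} dy is finite. -/
/-!
Peetre's inequality `(1 + x²) / (1 + y²) ≤ 2 (1 + (x - y)²)` bounds the kernel
`(r x / r y) e^{-|x-y|}` by `2^|σ| (1 + (x - y)²)^|σ| e^{-|x-y|}`, a translate of one fixed
function. That function is integrable because polynomial growth is beaten by `e^{-|u|}`, so
the integrals are bounded uniformly in `x` by translation invariance of Lebesgue measure.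
-/

open MeasureTheory Filter Asymptotics Real

lemma one_add_sq_div_one_add_sq_le (x y : ℝ) :
    (1 + x ^ 2) / (1 + y ^ 2) ≤ 2 * (1 + (x - y) ^ 2) := by
  rw [div_le_iff₀ (by positivity)]
  nlinarith [sq_nonneg (x - 2 * y), sq_nonneg ((x - y) * y)]

lemma one_add_sq_rpow_div_le (s x y : ℝ) :
    (1 + x ^ 2) ^ s / (1 + y ^ 2) ^ s ≤ 2 ^ |s| * (1 + (x - y) ^ 2) ^ |s| := by
  rw [← mul_rpow (by norm_num) (by positivity)]
  rcases le_total 0 s with hs | hs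
  · rw [abs_of_nonneg hs, ← div_rpow (by positivity) (by positivity)]
    exact rpow_le_rpow (by positivity) (one_add_sq_div_one_add_sq_le x y) hs
  · obtain ⟨t, ht, rfl⟩ : ∃ t, 0 ≤ t ∧ s = -t := ⟨-s, neg_nonneg.2 hs, (neg_neg s).symm⟩
    rw [abs_neg, abs_of_nonneg ht, rpow_neg (by positivity), rpow_neg (by positivity),
      inv_div_inv, ← div_rpow (by positivity) (by positivity), ← neg_sub y x, neg_sq]
    exact rpow_le_rpow (by positivity) (one_add_sq_div_one_add_sq_le y x) ht

lemma one_add_sq_rpow_isBigO_exp {s : ℝ} (hs : 0 ≤ s) :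
    (fun u : ℝ => (1 + u ^ 2) ^ s) =O[atTop] fun u => exp (1 / 2 * u) := by
  have h_sq : (fun u : ℝ => 1 + u ^ 2) =O[atTop] fun u => u ^ 2 := by
    refine IsBigO.of_bound 2 ?_
    filter_upwards [eventually_ge_atTop 1] with u hu
    rw [norm_of_nonneg (by positivity), norm_of_nonneg (by positivity)]
    nlinarith
  have h_pow : (fun u : ℝ => (u ^ 2) ^ s) =ᶠ[atTop] fun u => u ^ (2 * s) := by
    filter_upwards [eventually_ge_atTop 0] with u hu
    rw [← rpow_natCast, ← rpow_mul hu, Nat.cast_ofNat]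
  exact (h_sq.rpow hs (Eventually.of_forall fun u => by positivity)).trans <|
    (isLittleO_rpow_exp_pos_mul_atTop (2 * s) one_half_pos).isBigO.congr' h_pow.symm
      EventuallyEq.rfl

lemma one_add_sq_rpow_mul_exp_neg_abs_isBigO {s : ℝ} (hs : 0 ≤ s) :
    (fun u : ℝ => (1 + u ^ 2) ^ s * exp (-|u|)) =O[atTop] fun u => exp (-(1 / 2) * u) := by
  refine ((one_add_sq_rpow_isBigO_exp hs).mul (isBigO_refl (fun u => exp (-|u|)) _)).congr'
    EventuallyEq.rfl ?_
  filter_upwards [eventually_ge_atTop 0] with u hu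
  rw [abs_of_nonneg hu, ← exp_add]
  ring_nf

lemma integrable_one_add_sq_rpow_mul_exp_neg_abs {s : ℝ} (hs : 0 ≤ s) :
    Integrable (fun u : ℝ => (1 + u ^ 2) ^ s * exp (-|u|)) := by
  have h_cont : Continuous (fun u : ℝ => (1 + u ^ 2) ^ s * exp (-|u|)) := by
    fun_prop (disch := exact fun _ => Or.inr hs)
  refine h_cont.locallyIntegrable.integrable_of_isBigO_atTop_of_norm_isNegInvariant
    (Eventually.of_forall fun u => ?_) (one_add_sq_rpow_mul_exp_neg_abs_isBigO hs)
    ⟨Set.Ioi 0, Ioi_mem_atTop 0, exp_neg_integrableOn_Ioi 0 one_half_pos⟩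
  simp [abs_neg]

theorem kappa_poly_weight_general (σ : ℝ) :
    ∃ K : ℝ, ∀ x : ℝ,
      (∫ y : ℝ, ((1 + x ^ 2) ^ σ / (1 + y ^ 2) ^ σ) * Real.exp (-|x - y|)) ≤ K := by
  set w : ℝ → ℝ := fun u => (1 + u ^ 2) ^ |σ| * exp (-|u|)
  have hw : Integrable w := integrable_one_add_sq_rpow_mul_exp_neg_abs (abs_nonneg σ)
  refine ⟨2 ^ |σ| * ∫ u, w u, fun x => ?_⟩
  have h_kernel : ∀ y, (1 + x ^ 2) ^ σ / (1 + y ^ 2) ^ σ * exp (-|x - y|) ≤ 2 ^ |σ| * w (x - y) :=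
    fun y => by
      rw [← mul_assoc]
      exact mul_le_mul_of_nonneg_right (one_add_sq_rpow_div_le σ x y) (exp_pos _).le
  calc (∫ y, (1 + x ^ 2) ^ σ / (1 + y ^ 2) ^ σ * exp (-|x - y|))
      ≤ ∫ y, 2 ^ |σ| * w (x - y) :=
        integral_mono_of_nonneg (Eventually.of_forall fun y => by positivity)
          ((hw.comp_sub_left x).const_mul _) (Eventually.of_forall h_kernel)
    _ = 2 ^ |σ| * ∫ u, w u := by rw [integral_const_mul, integral_sub_left_eq_self w volume x]

theorem kappa_poly_weight (σ : ℝ) (hσ : 0 < σ) :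
    ∃ K : ℝ, ∀ x : ℝ,
      (∫ y : ℝ, ((1 + x ^ 2) ^ σ / (1 + y ^ 2) ^ σ) * Real.exp (-|x - y|)) ≤ K :=
  kappa_poly_weight_general σ
end

section
/- Let (f_n)_{n ∈ ℤ} be a doubly infinite sequence of complex numbers with Σ_{n ∈ ℤ} |f_n| < ∞. Then |Σ_{n ∈ ℤ} (-1)^n f_n| ≤ (1/2) Σ_{n ∈ ℤ} |f_{n} - f_{n-1}|. -/
theorem alternating_tsum_bound (f : ℤ → ℂ) (hf : Summable fun n : ℤ => ‖f n‖) :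
    ‖∑' n : ℤ, ((-1 : ℂ) ^ n) * f n‖ ≤ (1 / 2) * ∑' n : ℤ, ‖f n - f (n - 1)‖ := by
  have hnorm : ∀ n : ℤ, ‖((-1:ℂ)^n * f n)‖ = ‖f n‖ := by
    intro n
    rw [norm_mul, norm_zpow, norm_neg, norm_one, one_zpow, one_mul]
  have h1 : Summable (fun n : ℤ => (-1:ℂ)^n * f n) := by
    apply Summable.of_norm
    simpa only [hnorm] using hf
  have hf' : Summable (fun n : ℤ => ‖f (n-1)‖) :=
    ((Equiv.subRight (1:ℤ)).summable_iff).mpr hf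
  have h2 : Summable (fun n : ℤ => (-1:ℂ)^n * f (n-1)) := by
    apply Summable.of_norm
    have : ∀ n : ℤ, ‖((-1:ℂ)^n * f (n-1))‖ = ‖f (n-1)‖ := by
      intro n
      rw [norm_mul, norm_zpow, norm_neg, norm_one, one_zpow, one_mul]
    simpa only [this] using hf'
  set S := ∑' n : ℤ, (-1:ℂ)^n * f n with hS
  have hkey : ∀ n : ℤ, (-1:ℂ)^n * f (n-1) = (fun m : ℤ => -((-1:ℂ)^m * f m)) ((Equiv.subRight (1:ℤ)) n) := by
    intro n
    simp only [Equiv.subRight_apply]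
    have : (-1:ℂ)^n = -((-1:ℂ)^(n-1)) := by
      rw [sub_eq_add_neg, zpow_add₀ (by norm_num : (-1:ℂ) ≠ 0)]
      norm_num
    rw [this]; ring
  have hshift : ∑' n : ℤ, (-1:ℂ)^n * f (n-1) = -S := by
    have heq := (Equiv.subRight (1:ℤ)).tsum_eq (fun m : ℤ => -((-1:ℂ)^m * f m))
    rw [tsum_congr hkey, heq, tsum_neg]
  have h12 : Summable (fun n : ℤ => (-1:ℂ)^n * f n - (-1:ℂ)^n * f (n-1)) := h1.sub h2
  have h2S : ∑' n : ℤ, ((-1:ℂ)^n * f n - (-1:ℂ)^n * f (n-1)) = 2 * S := by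
    rw [Summable.tsum_sub h1 h2, hshift]; ring
  have hnorms : Summable (fun n : ℤ => ‖f n - f (n-1)‖) := by
    apply Summable.of_nonneg_of_le (fun n => norm_nonneg _)
      (fun n => norm_sub_le _ _) (hf.add hf')
  have hne : ∀ n : ℤ, ‖(-1:ℂ)^n * f n - (-1:ℂ)^n * f (n-1)‖ = ‖f n - f (n-1)‖ := by
    intro n
    rw [← mul_sub, norm_mul, norm_zpow, norm_neg, norm_one, one_zpow, one_mul]
  have hsum : Summable (fun n : ℤ => ‖(-1:ℂ)^n * f n - (-1:ℂ)^n * f (n-1)‖) := by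
    simpa only [hne] using hnorms
  have hbound : ‖∑' n : ℤ, ((-1:ℂ)^n * f n - (-1:ℂ)^n * f (n-1))‖
      ≤ ∑' n : ℤ, ‖f n - f (n-1)‖ :=
    calc ‖∑' n : ℤ, ((-1:ℂ)^n * f n - (-1:ℂ)^n * f (n-1))‖
        ≤ ∑' n : ℤ, ‖(-1:ℂ)^n * f n - (-1:ℂ)^n * f (n-1)‖ := norm_tsum_le_tsum_norm hsum
      _ = ∑' n : ℤ, ‖f n - f (n-1)‖ := tsum_congr hne
  rw [h2S] at hbound
  have : ‖(2:ℂ) * S‖ = 2 * ‖S‖ := by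
    rw [norm_mul]; norm_num
  rw [this] at hbound
  linarith
end
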